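/- For all x ∈ U^ev, the element Σ S⁻¹(ad_{R₁}(x))·R₂ of U_ζ — that is, the image of the R-matrix R = Σ R₁ ⊗ R₂ under the ℂ-linear map determined by a⊗b ↦ S⁻¹(ad_a(x))·b — lies in U^ev. -/

import Mathlib

/-! Write `D = (4ℓ)⁻¹ Σₙ eₙ ⊗ Kⁿ` with `eₙ = Σₘ s^(-mn) Kᵐ` (`fourierK ℓ n`), so that `R` is a
linear combination of the tensors `eₙ Eʲ ⊗ Kⁿ Fʲ`. Since `ad` is an action and
`ad_{Kᵐ}(y) = Kᵐ y K⁻ᵐ`, the summand `S⁻¹(ad_{eₙ Eʲ}(x)) Kⁿ Fʲ` equals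
`(Σₘ s^(-mn) Kᵐ z K⁻ᵐ) Kⁿ Fʲ` (`twistedConjSum`) with `z = S⁻¹(ad_{Eʲ}(x)) ∈ U^ev`.
For even `n` every factor lies in `U^ev`, conjugation by `K` preserving `U^ev`. For odd `n` the
sum vanishes: `K^(2ℓ)` commutes with `U^ev` because `t^(2ℓ) = 1`, while `s^(-2ℓn) = -1`, so the
terms `m` and `m + 2ℓ` cancel. -/

open scoped TensorProduct

noncomputable section
namespace RestrictedQsl2

inductive Gen : Type | E | F | K | Kinv

abbrev FA : Type := FreeAlgebra ℂ Gen

/-- `t = exp(πi/ℓ)`. -/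
def tval (ℓ : ℕ) : ℂ := Complex.exp (Real.pi * Complex.I / ℓ)

/-- `s = exp(πi/(2ℓ))`, so `s² = t`. -/
def sval (ℓ : ℕ) : ℂ := Complex.exp (Real.pi * Complex.I / (2 * ℓ))

/-- Defining relations of the restricted quantum group `U_ζ(sl₂)`. -/
inductive Rel (ℓ : ℕ) : FA → FA → Prop
  | KKinv : Rel ℓ (FreeAlgebra.ι ℂ Gen.K * FreeAlgebra.ι ℂ Gen.Kinv) 1
  | KinvK : Rel ℓ (FreeAlgebra.ι ℂ Gen.Kinv * FreeAlgebra.ι ℂ Gen.K) 1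
  | KE : Rel ℓ (FreeAlgebra.ι ℂ Gen.K * FreeAlgebra.ι ℂ Gen.E)
      (tval ℓ • (FreeAlgebra.ι ℂ Gen.E * FreeAlgebra.ι ℂ Gen.K))
  | KF : Rel ℓ (FreeAlgebra.ι ℂ Gen.K * FreeAlgebra.ι ℂ Gen.F)
      ((tval ℓ)⁻¹ • (FreeAlgebra.ι ℂ Gen.F * FreeAlgebra.ι ℂ Gen.K))
  | EF : Rel ℓ
      (FreeAlgebra.ι ℂ Gen.E * FreeAlgebra.ι ℂ Gen.F -
        FreeAlgebra.ι ℂ Gen.F * FreeAlgebra.ι ℂ Gen.E)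
      ((tval ℓ - (tval ℓ)⁻¹)⁻¹ • (FreeAlgebra.ι ℂ Gen.K ^ 2 - FreeAlgebra.ι ℂ Gen.Kinv ^ 2))
  | Epow : Rel ℓ (FreeAlgebra.ι ℂ Gen.E ^ ℓ) 0
  | Fpow : Rel ℓ (FreeAlgebra.ι ℂ Gen.F ^ ℓ) 0
  | Kpow : Rel ℓ (FreeAlgebra.ι ℂ Gen.K ^ (4 * ℓ)) 1

/-- The restricted quantum group `U_ζ(sl₂)`. -/
abbrev Uq (ℓ : ℕ) : Type := RingQuot (Rel ℓ)

def gE (ℓ : ℕ) : Uq ℓ := RingQuot.mkAlgHom ℂ (Rel ℓ) (FreeAlgebra.ι ℂ Gen.E)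
def gF (ℓ : ℕ) : Uq ℓ := RingQuot.mkAlgHom ℂ (Rel ℓ) (FreeAlgebra.ι ℂ Gen.F)
def gK (ℓ : ℕ) : Uq ℓ := RingQuot.mkAlgHom ℂ (Rel ℓ) (FreeAlgebra.ι ℂ Gen.K)
def gKinv (ℓ : ℕ) : Uq ℓ := RingQuot.mkAlgHom ℂ (Rel ℓ) (FreeAlgebra.ι ℂ Gen.Kinv)

/-- The Casimir element `C = FE + (K²t + K⁻²t⁻¹)/(t-t⁻¹)²`. -/
def Cas (ℓ : ℕ) : Uq ℓ :=
  gF ℓ * gE ℓ +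
    ((tval ℓ - (tval ℓ)⁻¹) ^ 2)⁻¹ • (tval ℓ • gK ℓ ^ 2 + (tval ℓ)⁻¹ • gKinv ℓ ^ 2)

/-- Quantum integer `[n]`. -/
def qint (ℓ n : ℕ) : ℂ := (tval ℓ ^ n - (tval ℓ)⁻¹ ^ n) / (tval ℓ - (tval ℓ)⁻¹)

/-- Quantum factorial `[n]!`. -/
def qfact (ℓ n : ℕ) : ℂ := ∏ k ∈ Finset.range n, qint ℓ (k + 1)

/-- The diagonal part `D` of the universal `R`-matrix. -/
def Dmat (ℓ : ℕ) : Uq ℓ ⊗[ℂ] Uq ℓ :=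
  ((4 * ℓ : ℂ))⁻¹ • ∑ m ∈ Finset.range (4 * ℓ), ∑ n ∈ Finset.range (4 * ℓ),
    (sval ℓ ^ (-(m * n : ℤ))) • ((gK ℓ ^ m) ⊗ₜ[ℂ] (gK ℓ ^ n))

/-- The universal `R`-matrix. -/
def Rmat (ℓ : ℕ) : Uq ℓ ⊗[ℂ] Uq ℓ :=
  Dmat ℓ * ∑ n ∈ Finset.range ℓ,
    (((tval ℓ - (tval ℓ)⁻¹) ^ n / qfact ℓ n) * tval ℓ ^ (n * (n - 1) / 2)) •
      ((gE ℓ ^ n) ⊗ₜ[ℂ] (gF ℓ ^ n))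

/-- The even subalgebra `U^ev`, generated by `E`, `F`, `K²`, `K⁻²`. -/
def Uev (ℓ : ℕ) : Subalgebra ℂ (Uq ℓ) :=
  Algebra.adjoin ℂ {gE ℓ, gF ℓ, gK ℓ ^ 2, gKinv ℓ ^ 2}

/-- The image of `U^ev ⊗ U^ev` in `U_ζ ⊗ U_ζ`. -/
def UevT (ℓ : ℕ) : Submodule ℂ (Uq ℓ ⊗[ℂ] Uq ℓ) :=
  LinearMap.range
    (TensorProduct.map (Subalgebra.toSubmodule (Uev ℓ)).subtype
      (Subalgebra.toSubmodule (Uev ℓ)).subtype)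

/-- The adjoint action, as a linear map `x ⊗ r ↦ ad_r(x) = Σ r′ x S(r″)`. -/
def adMap (ℓ : ℕ) (Δ : Uq ℓ →ₐ[ℂ] Uq ℓ ⊗[ℂ] Uq ℓ) (S : Uq ℓ →ₗ[ℂ] Uq ℓ) :
    Uq ℓ ⊗[ℂ] Uq ℓ →ₗ[ℂ] Uq ℓ :=
  LinearMap.mul' ℂ (Uq ℓ) ∘ₗ
    TensorProduct.map LinearMap.id (LinearMap.mul' ℂ (Uq ℓ)) ∘ₗ
    (TensorProduct.leftComm ℂ (Uq ℓ) (Uq ℓ) (Uq ℓ)).toLinearMap ∘ₗ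
    TensorProduct.map LinearMap.id (TensorProduct.map LinearMap.id S) ∘ₗ
    TensorProduct.map LinearMap.id Δ.toLinearMap

/-- `adL y : a ↦ ad_a(y)`, linear in `a`. -/
def adL (ℓ : ℕ) (Δ : Uq ℓ →ₐ[ℂ] Uq ℓ ⊗[ℂ] Uq ℓ) (S : Uq ℓ →ₗ[ℂ] Uq ℓ) (y : Uq ℓ) :
    Uq ℓ →ₗ[ℂ] Uq ℓ :=
  adMap ℓ Δ S ∘ₗ TensorProduct.mk ℂ (Uq ℓ) (Uq ℓ) y

end RestrictedQsl2

section Antimultiplicative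

variable {M : Type*}

theorem antimul_map_pow [Monoid M] {S : M → M} (h1 : S 1 = 1)
    (hmul : ∀ a b, S (a * b) = S b * S a) (a : M) (n : ℕ) : S (a ^ n) = S a ^ n := by
  induction n with
  | zero => rw [pow_zero, pow_zero, h1]
  | succ n ih => rw [pow_succ, hmul, ih, ← pow_succ']

theorem antimul_of_inverse [Mul M] {S T : M → M} (hmul : ∀ a b, S (a * b) = S b * S a)
    (hTS : ∀ a, T (S a) = a) (hST : ∀ a, S (T a) = a) (a b : M) :
    T (a * b) = T b * T a := by
  rw [← hTS (T b * T a), hmul, hST, hST]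

end Antimultiplicative

section Algebra

variable {R A : Type*} [CommSemiring R] [Semiring A] [Algebra R A]

theorem antimul_mem_of_mem_adjoin {B : Subalgebra R A} {s : Set A} {T : A →ₗ[R] A}
    (h1 : T 1 = 1) (hmul : ∀ a b, T (a * b) = T b * T a) (hs : ∀ g ∈ s, T g ∈ B)
    {z : A} (hz : z ∈ Algebra.adjoin R s) : T z ∈ B := by
  induction hz using Algebra.adjoin_induction with
  | mem g hg => exact hs g hg
  | algebraMap r => rw [Algebra.algebraMap_eq_smul_one, map_smul, h1]; exact B.smul_mem B.one_mem r
  | add a b _ _ ha hb => rw [map_add]; exact add_mem ha hb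
  | mul a b _ _ ha hb => rw [hmul]; exact mul_mem hb ha

theorem conj_mem_of_mem_adjoin {B : Subalgebra R A} {s : Set A} {k k' : A}
    (hkk' : k * k' = 1) (hk'k : k' * k = 1) (hs : ∀ g ∈ s, k * g * k' ∈ B)
    {z : A} (hz : z ∈ Algebra.adjoin R s) : k * z * k' ∈ B := by
  induction hz using Algebra.adjoin_induction with
  | mem g hg => exact hs g hg
  | algebraMap r =>
    rw [← Algebra.commutes, mul_assoc, hkk', mul_one]; exact B.algebraMap_mem r
  | add a b _ _ ha hb => rw [mul_add, add_mul]; exact add_mem ha hb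
  | mul a b _ _ ha hb =>
    have h : k * (a * b) * k' = k * a * k' * (k * b * k') := by
      simp only [mul_assoc, ← mul_assoc k' k, hk'k, one_mul]
    rw [h]; exact mul_mem ha hb

def sandwich (S : A →ₗ[R] A) (x : A) : A ⊗[R] A →ₗ[R] A :=
  LinearMap.mul' R A ∘ₗ TensorProduct.map (LinearMap.mulRight R x) S

@[simp] theorem sandwich_tmul (S : A →ₗ[R] A) (x a b : A) :
    sandwich S x (a ⊗ₜ b) = a * x * S b := rfl

theorem sandwich_mul {S : A →ₗ[R] A} (hmul : ∀ a b, S (a * b) = S b * S a) (x : A)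
    (u v : A ⊗[R] A) : sandwich S x (u * v) = sandwich S (sandwich S x v) u := by
  induction u using TensorProduct.induction_on with
  | zero => simp
  | add u₁ u₂ h₁ h₂ => simp only [add_mul, map_add, h₁, h₂]
  | tmul a b =>
    induction v using TensorProduct.induction_on with
    | zero => simp
    | add v₁ v₂ h₁ h₂ => simp only [mul_add, map_add, h₁, h₂, sandwich_tmul, add_mul]
    | tmul c d => simp only [Algebra.TensorProduct.tmul_mul_tmul, sandwich_tmul, hmul, mul_assoc]

end Algebra

section Ring

variable {R A : Type*} [CommRing R] [Ring A] [Algebra R A]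

theorem sum_range_add_smul_conj_eq_zero {ω : R} {k k' z : A} {N : ℕ} (hω : ω ^ N = -1)
    (hz : k ^ N * z * k' ^ N = z) :
    ∑ m ∈ Finset.range (N + N), ω ^ m • (k ^ m * z * k' ^ m) = 0 := by
  have hshift : ∀ m, ω ^ (N + m) • (k ^ (N + m) * z * k' ^ (N + m)) =
      -(ω ^ m • (k ^ m * z * k' ^ m)) := by
    intro m
    have hconj : k ^ (N + m) * z * k' ^ (N + m) = k ^ m * (k ^ N * z * k' ^ N) * k' ^ m := by
      rw [pow_add, pow_add, pow_mul_comm k N m]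
      simp only [mul_assoc]
    rw [hconj, hz, pow_add, hω, neg_one_mul, neg_smul]
  rw [Finset.sum_range_add, Finset.sum_congr rfl fun m _ => hshift m, Finset.sum_neg_distrib,
    add_neg_cancel]

end Ring

namespace RestrictedQsl2

theorem sval_sq {ℓ : ℕ} (hℓ : ℓ ≠ 0) : sval ℓ ^ 2 = tval ℓ := by
  rw [sval, tval, ← Complex.exp_nat_mul]
  congr 1
  push_cast
  field_simp

theorem sval_pow_two_mul {ℓ : ℕ} (hℓ : ℓ ≠ 0) : sval ℓ ^ (2 * ℓ) = -1 := by
  rw [sval, ← Complex.exp_nat_mul, ← Complex.exp_pi_mul_I]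
  congr 1
  push_cast
  field_simp

theorem tval_pow_two_mul {ℓ : ℕ} (hℓ : ℓ ≠ 0) : tval ℓ ^ (2 * ℓ) = 1 := by
  rw [← sval_sq hℓ, ← pow_mul, mul_comm, pow_mul, sval_pow_two_mul hℓ, neg_one_sq]

section

variable (ℓ : ℕ)

theorem gK_mul_gKinv : gK ℓ * gKinv ℓ = 1 := by
  rw [gK, gKinv, ← map_mul, RingQuot.mkAlgHom_rel ℂ Rel.KKinv, map_one]

theorem gKinv_mul_gK : gKinv ℓ * gK ℓ = 1 := by
  rw [gK, gKinv, ← map_mul, RingQuot.mkAlgHom_rel ℂ Rel.KinvK, map_one]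

theorem gK_mul_gE : gK ℓ * gE ℓ = tval ℓ • (gE ℓ * gK ℓ) := by
  rw [gK, gE, ← map_mul, RingQuot.mkAlgHom_rel ℂ Rel.KE, map_smul, map_mul]

theorem gK_mul_gF : gK ℓ * gF ℓ = (tval ℓ)⁻¹ • (gF ℓ * gK ℓ) := by
  rw [gK, gF, ← map_mul, RingQuot.mkAlgHom_rel ℂ Rel.KF, map_smul, map_mul]

theorem commute_gK_gKinv : Commute (gK ℓ) (gKinv ℓ) :=
  (gK_mul_gKinv ℓ).trans (gKinv_mul_gK ℓ).symm

theorem gK_pow_mul_gKinv_pow (m : ℕ) : gK ℓ ^ m * gKinv ℓ ^ m = 1 := by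
  rw [← (commute_gK_gKinv ℓ).mul_pow, gK_mul_gKinv, one_pow]

theorem gKinv_pow_mul_gK_pow (m : ℕ) : gKinv ℓ ^ m * gK ℓ ^ m = 1 := by
  rw [← (commute_gK_gKinv ℓ).symm.mul_pow, gKinv_mul_gK, one_pow]

theorem gK_pow_mul_gE (m : ℕ) : gK ℓ ^ m * gE ℓ = tval ℓ ^ m • (gE ℓ * gK ℓ ^ m) := by
  induction m with
  | zero => simp
  | succ m ih =>
    rw [pow_succ, mul_assoc, gK_mul_gE, mul_smul_comm, ← mul_assoc, ih, smul_mul_assoc,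
      smul_smul, ← pow_succ, mul_assoc, ← pow_succ, ← pow_succ']

theorem gK_pow_mul_gF (m : ℕ) : gK ℓ ^ m * gF ℓ = (tval ℓ)⁻¹ ^ m • (gF ℓ * gK ℓ ^ m) := by
  induction m with
  | zero => simp
  | succ m ih =>
    rw [pow_succ, mul_assoc, gK_mul_gF, mul_smul_comm, ← mul_assoc, ih, smul_mul_assoc,
      smul_smul, ← pow_succ, mul_assoc, ← pow_succ, ← pow_succ']

theorem gE_mem_Uev : gE ℓ ∈ Uev ℓ := Algebra.subset_adjoin (by simp)

theorem gF_mem_Uev : gF ℓ ∈ Uev ℓ := Algebra.subset_adjoin (by simp)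

theorem gK_sq_mem_Uev : gK ℓ ^ 2 ∈ Uev ℓ := Algebra.subset_adjoin (by simp)

theorem gKinv_sq_mem_Uev : gKinv ℓ ^ 2 ∈ Uev ℓ := Algebra.subset_adjoin (by simp)

theorem gK_pow_mem_Uev {n : ℕ} (hn : Even n) : gK ℓ ^ n ∈ Uev ℓ := by
  obtain ⟨r, rfl⟩ := hn
  rw [← two_mul, pow_mul]
  exact pow_mem (gK_sq_mem_Uev ℓ) r

theorem gK_pow_conj_mem_Uev (m : ℕ) {z : Uq ℓ} (hz : z ∈ Uev ℓ) :
    gK ℓ ^ m * z * gKinv ℓ ^ m ∈ Uev ℓ := by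
  have hcomm : ∀ g, Commute (gK ℓ ^ m) g → gK ℓ ^ m * g * gKinv ℓ ^ m = g := fun g hg => by
    rw [hg.eq, mul_assoc, gK_pow_mul_gKinv_pow, mul_one]
  refine conj_mem_of_mem_adjoin (gK_pow_mul_gKinv_pow ℓ m) (gKinv_pow_mul_gK_pow ℓ m)
    (fun g hg => ?_) hz
  simp only [Set.mem_insert_iff, Set.mem_singleton_iff] at hg
  rcases hg with rfl | rfl | rfl | rfl
  · rw [gK_pow_mul_gE, smul_mul_assoc, mul_assoc, gK_pow_mul_gKinv_pow, mul_one]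
    exact Subalgebra.smul_mem _ (gE_mem_Uev ℓ) _
  · rw [gK_pow_mul_gF, smul_mul_assoc, mul_assoc, gK_pow_mul_gKinv_pow, mul_one]
    exact Subalgebra.smul_mem _ (gF_mem_Uev ℓ) _
  · rw [hcomm _ (Commute.pow_pow_self _ _ _)]; exact gK_sq_mem_Uev ℓ
  · rw [hcomm _ ((commute_gK_gKinv ℓ).pow_pow _ _)]; exact gKinv_sq_mem_Uev ℓ

def fourierK (n : ℕ) : Uq ℓ :=
  ∑ m ∈ Finset.range (4 * ℓ), (sval ℓ ^ n)⁻¹ ^ m • gK ℓ ^ m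

def twistedConjSum (n : ℕ) (z : Uq ℓ) : Uq ℓ :=
  ∑ m ∈ Finset.range (4 * ℓ), (sval ℓ ^ n)⁻¹ ^ m • (gK ℓ ^ m * z * gKinv ℓ ^ m)

theorem Dmat_eq_sum_fourierK : Dmat ℓ =
    ((4 * ℓ : ℂ))⁻¹ • ∑ n ∈ Finset.range (4 * ℓ), fourierK ℓ n ⊗ₜ[ℂ] (gK ℓ ^ n) := by
  have hcoeff : ∀ m n : ℕ, sval ℓ ^ (-(m * n : ℤ)) = (sval ℓ ^ n)⁻¹ ^ m := fun m n => by
    rw [zpow_neg, mul_comm, zpow_mul, zpow_natCast, zpow_natCast, inv_pow]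
  simp only [Dmat, fourierK, hcoeff, TensorProduct.sum_tmul, TensorProduct.smul_tmul']
  rw [Finset.sum_comm]

theorem Rmat_mem_span : Rmat ℓ ∈ Submodule.span ℂ
    {u | ∃ n j : ℕ, u = (fourierK ℓ n * gE ℓ ^ j) ⊗ₜ[ℂ] (gK ℓ ^ n * gF ℓ ^ j)} := by
  rw [Rmat, Dmat_eq_sum_fourierK, smul_mul_assoc, Finset.sum_mul]
  refine Submodule.smul_mem _ _ (sum_mem fun n _ => ?_)
  rw [Finset.mul_sum]
  refine sum_mem fun j _ => ?_
  rw [mul_smul_comm, Algebra.TensorProduct.tmul_mul_tmul]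
  exact Submodule.smul_mem _ _ (Submodule.subset_span ⟨n, j, rfl⟩)

end

theorem Uev_le_centralizer {ℓ : ℕ} (hℓ : ℓ ≠ 0) :
    Uev ℓ ≤ Subalgebra.centralizer ℂ {gK ℓ ^ (2 * ℓ)} := by
  refine Algebra.adjoin_le fun g hg => (Subalgebra.mem_centralizer_iff ℂ).mpr fun _ hk => ?_
  rw [Set.mem_singleton_iff] at hk
  subst hk
  simp only [Set.mem_insert_iff, Set.mem_singleton_iff] at hg
  rcases hg with rfl | rfl | rfl | rfl
  · rw [gK_pow_mul_gE, tval_pow_two_mul hℓ, one_smul]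
  · rw [gK_pow_mul_gF, inv_pow, tval_pow_two_mul hℓ, inv_one, one_smul]
  · exact Commute.pow_pow_self _ _ _
  · exact (commute_gK_gKinv ℓ).pow_pow _ _

theorem gK_pow_two_mul_conj {ℓ : ℕ} (hℓ : ℓ ≠ 0) {z : Uq ℓ} (hz : z ∈ Uev ℓ) :
    gK ℓ ^ (2 * ℓ) * z * gKinv ℓ ^ (2 * ℓ) = z := by
  rw [(Subalgebra.mem_centralizer_iff ℂ).mp (Uev_le_centralizer hℓ hz) _ rfl, mul_assoc,
    gK_pow_mul_gKinv_pow, mul_one]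

theorem twistedConjSum_mul_gK_pow_mem_Uev {ℓ : ℕ} (hℓ : ℓ ≠ 0) (n : ℕ) {z : Uq ℓ}
    (hz : z ∈ Uev ℓ) : twistedConjSum ℓ n z * gK ℓ ^ n ∈ Uev ℓ := by
  rcases Nat.even_or_odd n with hn | hn
  · refine mul_mem (sum_mem fun m _ => ?_) (gK_pow_mem_Uev ℓ hn)
    exact Subalgebra.smul_mem _ (gK_pow_conj_mem_Uev ℓ m hz) _
  · have hω : (sval ℓ ^ n)⁻¹ ^ (2 * ℓ) = -1 := by
      rw [inv_pow, ← pow_mul, mul_comm, pow_mul, sval_pow_two_mul hℓ, hn.neg_one_pow, inv_neg,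
        inv_one]
    rw [twistedConjSum, show 4 * ℓ = 2 * ℓ + 2 * ℓ by ring,
      sum_range_add_smul_conj_eq_zero hω (gK_pow_two_mul_conj hℓ hz), zero_mul]
    exact zero_mem _

section Adjoint

variable {ℓ : ℕ} {Δ : Uq ℓ →ₐ[ℂ] Uq ℓ ⊗[ℂ] Uq ℓ} {S Sinv : Uq ℓ →ₗ[ℂ] Uq ℓ}

theorem adL_eq_sandwich (x a : Uq ℓ) : adL ℓ Δ S x a = sandwich S x (Δ a) := by
  simp only [adL, adMap, LinearMap.comp_apply, TensorProduct.mk_apply, TensorProduct.map_tmul,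
    LinearMap.id_coe, id_eq, AlgHom.toLinearMap_apply]
  induction Δ a using TensorProduct.induction_on with
  | zero => simp only [TensorProduct.tmul_zero, map_zero]
  | tmul a b =>
    simp only [TensorProduct.map_tmul, LinearMap.id_coe, id_eq, LinearEquiv.coe_coe,
      TensorProduct.leftComm_tmul, LinearMap.mul'_apply, sandwich_tmul, mul_assoc]
  | add u v hu hv => simp only [TensorProduct.tmul_add, map_add, hu, hv]

theorem adL_mul (hSmul : ∀ a b : Uq ℓ, S (a * b) = S b * S a) (x a b : Uq ℓ) :
    adL ℓ Δ S x (a * b) = adL ℓ Δ S (adL ℓ Δ S x b) a := by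
  rw [adL_eq_sandwich, map_mul, sandwich_mul hSmul, ← adL_eq_sandwich, ← adL_eq_sandwich]

theorem adL_gK_pow (hΔK : Δ (gK ℓ) = gK ℓ ⊗ₜ[ℂ] gK ℓ) (hS1 : S 1 = 1)
    (hSmul : ∀ a b : Uq ℓ, S (a * b) = S b * S a) (hSK : S (gK ℓ) = gKinv ℓ) (x : Uq ℓ)
    (m : ℕ) : adL ℓ Δ S x (gK ℓ ^ m) = gK ℓ ^ m * x * gKinv ℓ ^ m := by
  rw [adL_eq_sandwich, map_pow, hΔK, Algebra.TensorProduct.tmul_pow, sandwich_tmul,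
    antimul_map_pow hS1 hSmul, hSK]

theorem adL_gE_pow_mem_Uev (hΔE : Δ (gE ℓ) = 1 ⊗ₜ[ℂ] gE ℓ + gE ℓ ⊗ₜ[ℂ] (gK ℓ ^ 2))
    (hS1 : S 1 = 1) (hSmul : ∀ a b : Uq ℓ, S (a * b) = S b * S a) (hSK : S (gK ℓ) = gKinv ℓ)
    (hSE : S (gE ℓ) = -(gE ℓ * gKinv ℓ ^ 2)) (j : ℕ) {x : Uq ℓ} (hx : x ∈ Uev ℓ) :
    adL ℓ Δ S x (gE ℓ ^ j) ∈ Uev ℓ := by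
  induction j generalizing x with
  | zero =>
    rwa [pow_zero, adL_eq_sandwich, map_one, Algebra.TensorProduct.one_def, sandwich_tmul, hS1,
      one_mul, mul_one]
  | succ j ih =>
    rw [pow_succ, adL_mul hSmul]
    refine ih ?_
    rw [adL_eq_sandwich, hΔE, map_add, sandwich_tmul, sandwich_tmul, hSE,
      antimul_map_pow hS1 hSmul, hSK, one_mul]
    exact add_mem (mul_mem hx (neg_mem (mul_mem (gE_mem_Uev ℓ) (gKinv_sq_mem_Uev ℓ))))
      (mul_mem (mul_mem (gE_mem_Uev ℓ) hx) (gKinv_sq_mem_Uev ℓ))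

theorem Sinv_mem_Uev (hS1 : S 1 = 1) (hSmul : ∀ a b : Uq ℓ, S (a * b) = S b * S a)
    (hSK : S (gK ℓ) = gKinv ℓ) (hSKinv : S (gKinv ℓ) = gK ℓ)
    (hSE : S (gE ℓ) = -(gE ℓ * gKinv ℓ ^ 2)) (hSF : S (gF ℓ) = -(gK ℓ ^ 2 * gF ℓ))
    (hSinvS : ∀ a : Uq ℓ, Sinv (S a) = a) (hSSinv : ∀ a : Uq ℓ, S (Sinv a) = a)
    {y : Uq ℓ} (hy : y ∈ Uev ℓ) : Sinv y ∈ Uev ℓ := by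
  have hSinv : ∀ {a b : Uq ℓ}, S b = a → Sinv a = b := fun h => h ▸ hSinvS _
  have hSKsq : S (gK ℓ ^ 2) = gKinv ℓ ^ 2 := by rw [antimul_map_pow hS1 hSmul, hSK]
  have hSKinvsq : S (gKinv ℓ ^ 2) = gK ℓ ^ 2 := by rw [antimul_map_pow hS1 hSmul, hSKinv]
  have hSinvE : Sinv (gE ℓ) = -(gKinv ℓ ^ 2 * gE ℓ) := hSinv <| by
    rw [map_neg, hSmul, hSE, hSKinvsq, neg_mul (gE ℓ * _), neg_neg, mul_assoc,
      gKinv_pow_mul_gK_pow, mul_one]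
  have hSinvF : Sinv (gF ℓ) = -(gF ℓ * gK ℓ ^ 2) := hSinv <| by
    rw [map_neg, hSmul, hSF, hSKsq, mul_neg (gKinv ℓ ^ 2), neg_neg, ← mul_assoc,
      gKinv_pow_mul_gK_pow, one_mul]
  refine antimul_mem_of_mem_adjoin (by simpa only [hS1] using hSinvS 1)
    (antimul_of_inverse hSmul hSinvS hSSinv) (fun g hg => ?_) hy
  simp only [Set.mem_insert_iff, Set.mem_singleton_iff] at hg
  rcases hg with rfl | rfl | rfl | rfl
  · rw [hSinvE]; exact neg_mem (mul_mem (gKinv_sq_mem_Uev ℓ) (gE_mem_Uev ℓ))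
  · rw [hSinvF]; exact neg_mem (mul_mem (gF_mem_Uev ℓ) (gK_sq_mem_Uev ℓ))
  · rw [hSinv hSKinvsq]; exact gKinv_sq_mem_Uev ℓ
  · rw [hSinv hSKsq]; exact gK_sq_mem_Uev ℓ

theorem Sinv_adL_gK_pow_mul (hΔK : Δ (gK ℓ) = gK ℓ ⊗ₜ[ℂ] gK ℓ) (hS1 : S 1 = 1)
    (hSmul : ∀ a b : Uq ℓ, S (a * b) = S b * S a)
    (hSK : S (gK ℓ) = gKinv ℓ) (hSKinv : S (gKinv ℓ) = gK ℓ)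
    (hSinvS : ∀ a : Uq ℓ, Sinv (S a) = a) (hSSinv : ∀ a : Uq ℓ, S (Sinv a) = a)
    (x a : Uq ℓ) (m : ℕ) :
    Sinv (adL ℓ Δ S x (gK ℓ ^ m * a)) = gK ℓ ^ m * Sinv (adL ℓ Δ S x a) * gKinv ℓ ^ m := by
  have hSinvKpow : Sinv (gK ℓ ^ m) = gKinv ℓ ^ m := by
    rw [← hSinvS (gKinv ℓ ^ m), antimul_map_pow hS1 hSmul, hSKinv]
  have hSinvKinvpow : Sinv (gKinv ℓ ^ m) = gK ℓ ^ m := by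
    rw [← hSinvS (gK ℓ ^ m), antimul_map_pow hS1 hSmul, hSK]
  rw [adL_mul hSmul, adL_gK_pow hΔK hS1 hSmul hSK, antimul_of_inverse hSmul hSinvS hSSinv,
    antimul_of_inverse hSmul hSinvS hSSinv, hSinvKpow, hSinvKinvpow, mul_assoc]

theorem Sinv_adL_fourierK_mul (hΔK : Δ (gK ℓ) = gK ℓ ⊗ₜ[ℂ] gK ℓ) (hS1 : S 1 = 1)
    (hSmul : ∀ a b : Uq ℓ, S (a * b) = S b * S a)
    (hSK : S (gK ℓ) = gKinv ℓ) (hSKinv : S (gKinv ℓ) = gK ℓ)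
    (hSinvS : ∀ a : Uq ℓ, Sinv (S a) = a) (hSSinv : ∀ a : Uq ℓ, S (Sinv a) = a)
    (x a : Uq ℓ) (n : ℕ) :
    Sinv (adL ℓ Δ S x (fourierK ℓ n * a)) = twistedConjSum ℓ n (Sinv (adL ℓ Δ S x a)) := by
  simp only [fourierK, twistedConjSum, Finset.sum_mul, smul_mul_assoc, map_sum, map_smul,
    Sinv_adL_gK_pow_mul hΔK hS1 hSmul hSK hSKinv hSinvS hSSinv]

end Adjoint

theorem Sinv_adR1_mul_R2_mem_Uev_general (ℓ : ℕ) (hℓ : 1 < ℓ)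
    (Δ : Uq ℓ →ₐ[ℂ] Uq ℓ ⊗[ℂ] Uq ℓ)
    (hΔK : Δ (gK ℓ) = gK ℓ ⊗ₜ[ℂ] gK ℓ)
    (hΔE : Δ (gE ℓ) = 1 ⊗ₜ[ℂ] gE ℓ + gE ℓ ⊗ₜ[ℂ] (gK ℓ ^ 2))
    (S : Uq ℓ →ₗ[ℂ] Uq ℓ)
    (hS1 : S 1 = 1) (hSmul : ∀ a b : Uq ℓ, S (a * b) = S b * S a)
    (hSK : S (gK ℓ) = gKinv ℓ) (hSKinv : S (gKinv ℓ) = gK ℓ)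
    (hSE : S (gE ℓ) = -(gE ℓ * gKinv ℓ ^ 2)) (hSF : S (gF ℓ) = -(gK ℓ ^ 2 * gF ℓ))
    (Sinv : Uq ℓ →ₗ[ℂ] Uq ℓ)
    (hSinvS : ∀ a : Uq ℓ, Sinv (S a) = a) (hSSinv : ∀ a : Uq ℓ, S (Sinv a) = a)
    (x : Uq ℓ) (hx : x ∈ Uev ℓ) :
    LinearMap.mul' ℂ (Uq ℓ)
        (TensorProduct.map (Sinv ∘ₗ adL ℓ Δ S x) LinearMap.id (Rmat ℓ)) ∈ Uev ℓ := by
  let Φ := LinearMap.mul' ℂ (Uq ℓ) ∘ₗ TensorProduct.map (Sinv ∘ₗ adL ℓ Δ S x) LinearMap.id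
  suffices Rmat ℓ ∈ (Subalgebra.toSubmodule (Uev ℓ)).comap Φ from this
  refine Submodule.span_le.mpr ?_ (Rmat_mem_span ℓ)
  rintro _ ⟨n, j, rfl⟩
  have hz : Sinv (adL ℓ Δ S x (gE ℓ ^ j)) ∈ Uev ℓ :=
    Sinv_mem_Uev hS1 hSmul hSK hSKinv hSE hSF hSinvS hSSinv
      (adL_gE_pow_mem_Uev hΔE hS1 hSmul hSK hSE j hx)
  change Sinv (adL ℓ Δ S x (fourierK ℓ n * gE ℓ ^ j)) * (gK ℓ ^ n * gF ℓ ^ j) ∈ Uev ℓ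
  rw [Sinv_adL_fourierK_mul hΔK hS1 hSmul hSK hSKinv hSinvS hSSinv, ← mul_assoc]
  exact mul_mem (twistedConjSum_mul_gK_pow_mem_Uev (by omega) n hz) (pow_mem (gF_mem_Uev ℓ) j)

/-- For `x ∈ U^ev`, the element `Σ S⁻¹(ad_{R₁}(x)) · R₂` of `U_ζ`
lies in `U^ev`.  Here `Sinv` is the inverse of the antipode `S`. -/
theorem Sinv_adR1_mul_R2_mem_Uev (ℓ : ℕ) (hℓ : 1 < ℓ)
    (Δ : Uq ℓ →ₐ[ℂ] Uq ℓ ⊗[ℂ] Uq ℓ)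
    (hΔK : Δ (gK ℓ) = gK ℓ ⊗ₜ[ℂ] gK ℓ)
    (hΔKinv : Δ (gKinv ℓ) = gKinv ℓ ⊗ₜ[ℂ] gKinv ℓ)
    (hΔE : Δ (gE ℓ) = 1 ⊗ₜ[ℂ] gE ℓ + gE ℓ ⊗ₜ[ℂ] (gK ℓ ^ 2))
    (hΔF : Δ (gF ℓ) = gF ℓ ⊗ₜ[ℂ] 1 + (gKinv ℓ ^ 2) ⊗ₜ[ℂ] gF ℓ)
    (S : Uq ℓ →ₗ[ℂ] Uq ℓ)
    (hS1 : S 1 = 1) (hSmul : ∀ a b : Uq ℓ, S (a * b) = S b * S a)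
    (hSK : S (gK ℓ) = gKinv ℓ) (hSKinv : S (gKinv ℓ) = gK ℓ)
    (hSE : S (gE ℓ) = -(gE ℓ * gKinv ℓ ^ 2)) (hSF : S (gF ℓ) = -(gK ℓ ^ 2 * gF ℓ))
    (Sinv : Uq ℓ →ₗ[ℂ] Uq ℓ)
    (hSinvS : ∀ a : Uq ℓ, Sinv (S a) = a) (hSSinv : ∀ a : Uq ℓ, S (Sinv a) = a)
    (x : Uq ℓ) (hx : x ∈ Uev ℓ) :
    LinearMap.mul' ℂ (Uq ℓ)
        (TensorProduct.map (Sinv ∘ₗ adL ℓ Δ S x) LinearMap.id (Rmat ℓ)) ∈ Uev ℓ :=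
  Sinv_adR1_mul_R2_mem_Uev_general ℓ hℓ Δ hΔK hΔE S hS1 hSmul hSK hSKinv hSE hSF Sinv hSinvS hSSinv
    x hx

end RestrictedQsl2
end
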